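/- Let n be an odd positive integer and k ≥ 1. Then the Segre variety P^k × (Pⁿ)^{k+1} is perfect: the tuple (k, n, …, n; (n+1)^k; 0,…,0) (with k+1 copies of n) is equiabundant, since (n+1)^k · (1 + k + (k+1)n) = (k+1)(n+1)^{k+1}, and T(k, n, …, n; (n+1)^k; 0,…,0) holds; that is, there exist (n+1)^k points p₁,…,p_{(n+1)^k} (pure tensors of nonzero vectors in K^{k+1} ⊗ (K^{n+1})^{⊗(k+1)}) such that Σ_j T_{p_j} = K^{k+1} ⊗ (K^{n+1})^{⊗(k+1)}, a space of dimension (k+1)(n+1)^{k+1}. -/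

import Mathlib

open scoped TensorProduct

/-- The subspace `G^i_p = v₁ ⊗ ⋯ ⊗ v_{i-1} ⊗ Vᵢ ⊗ v_{i+1} ⊗ ⋯ ⊗ v_k` of the tensor
space `⨂ᵢ K^{nᵢ+1}` attached to the point `p = v₁ ⊗ ⋯ ⊗ v_k`. -/
noncomputable def segreG (K : Type*) [Field K] {k : ℕ} (n : Fin k → ℕ)
    (v : ∀ i, Fin (n i + 1) → K) (i : Fin k) :
    Submodule K (⨂[K] i, (Fin (n i + 1) → K)) :=
  LinearMap.range ((PiTensorProduct.tprod K).toLinearMap v i)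

/-- The affine tangent space `T_p = Σᵢ v₁ ⊗ ⋯ ⊗ Vᵢ ⊗ ⋯ ⊗ v_k` to the Segre variety at
`p = v₁ ⊗ ⋯ ⊗ v_k`. -/
noncomputable def segreTangent (K : Type*) [Field K] {k : ℕ} (n : Fin k → ℕ)
    (v : ∀ i, Fin (n i + 1) → K) : Submodule K (⨂[K] i, (Fin (n i + 1) → K)) :=
  ⨆ i, segreG K n v i

/-- The statement `T(n₁,…,n_k; s; a₁,…,a_k)` of Abo–Ottaviani–Peterson holds:
there are points `p₁,…,p_s` and `q_{i,1},…,q_{i,aᵢ}` (pure tensors of nonzero vectors)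
such that the span of the tangent spaces `T_{p_j}` together with the subspaces
`G^i_{q_{i,l}}` has the expected (maximal possible) dimension
`min (s(1 + Σ nᵢ) + Σ aᵢ(nᵢ+1)) (Π (nᵢ+1))`. -/
def THolds (K : Type*) [Field K] {k : ℕ} (n : Fin k → ℕ) (s : ℕ) (a : Fin k → ℕ) : Prop :=
  ∃ (p : Fin s → ∀ i, Fin (n i + 1) → K)
    (q : ∀ i : Fin k, Fin (a i) → ∀ j, Fin (n j + 1) → K),
    (∀ j i, p j i ≠ 0) ∧ (∀ i l j, q i l j ≠ 0) ∧
    Module.finrank K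
      (((⨆ j, segreTangent K n (p j)) ⊔ (⨆ i, ⨆ l, segreG K n (q i l) i))
        : Submodule K (⨂[K] i, (Fin (n i + 1) → K)))
      = min (s * (1 + ∑ i, n i) + ∑ i, a i * (n i + 1)) (∏ i, (n i + 1))

/-- The statement `T(n₁,…,n_k; s; a₁,…,a_k)` fails: every choice of points gives a span
of dimension strictly smaller than the expected dimension. -/
def TFails (K : Type*) [Field K] {k : ℕ} (n : Fin k → ℕ) (s : ℕ) (a : Fin k → ℕ) : Prop :=
  ∀ (p : Fin s → ∀ i, Fin (n i + 1) → K)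
    (q : ∀ i : Fin k, Fin (a i) → ∀ j, Fin (n j + 1) → K),
    (∀ j i, p j i ≠ 0) → (∀ i l j, q i l j ≠ 0) →
    Module.finrank K
      (((⨆ j, segreTangent K n (p j)) ⊔ (⨆ i, ⨆ l, segreG K n (q i l) i))
        : Submodule K (⨂[K] i, (Fin (n i + 1) → K)))
      < min (s * (1 + ∑ i, n i) + ∑ i, a i * (n i + 1)) (∏ i, (n i + 1))

/-- The tuple `(n; s; a)` is subabundant. -/
def Subabundant {k : ℕ} (n : Fin k → ℕ) (s : ℕ) (a : Fin k → ℕ) : Prop :=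
  s * (1 + ∑ i, n i) + ∑ i, a i * (n i + 1) ≤ ∏ i, (n i + 1)

/-- The tuple `(n; s; a)` is superabundant. -/
def Superabundant {k : ℕ} (n : Fin k → ℕ) (s : ℕ) (a : Fin k → ℕ) : Prop :=
  ∏ i, (n i + 1) ≤ s * (1 + ∑ i, n i) + ∑ i, a i * (n i + 1)

/-!
Index the `(n+1)^k` points by the codewords `c ∈ (ℤ/(n+1))^{k+1}` with `∑ c_j = 0` (the group
`ℤ/(n+1)` is `Fin (n + 1)`), and take `p_c = m(z_c) ⊗ e_{c₀} ⊗ ⋯ ⊗ e_{c_k}`, where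
`m(z) = (1, z, …, z^k)` and the nodes `z_c ∈ K` are pairwise distinct. A basis tensor
`x ⊗ e_{a₀} ⊗ ⋯ ⊗ e_{a_k}` lies in the span of the tangent spaces: if `a` is a codeword, it lies
in the first summand of `T_{p_a}`; otherwise, with `s = ∑ a_j ≠ 0`, the `k + 1` codewords obtained
from `a` by replacing `a_i` with `a_i - s` each contribute `m(z) ⊗ e_{a₀} ⊗ ⋯ ⊗ e_{a_k}` for their
own node `z`, and `k + 1` moment vectors with distinct nodes span `K^{k+1}` (Vandermonde).
-/

open PiTensorProduct Function

section Codewords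

variable {G ι : Type*} [AddCommGroup G] [Fintype ι] [DecidableEq ι]

theorem sum_update_sub_sum_eq_zero (a : ι → G) (i : ι) :
    ∑ j, update a i (a i - ∑ t, a t) j = 0 := by
  rw [Finset.sum_update_of_mem (Finset.mem_univ i),
    ← Finset.add_sum_erase _ _ (Finset.mem_univ i)]
  simp [Finset.sdiff_singleton_eq_erase]

theorem update_sub_sum_injective (a : ι → G) (hs : ∑ t, a t ≠ 0) :
    Injective fun i => update a i (a i - ∑ t, a t) := by
  intro i i' h
  by_contra hne
  have hi := congrFun h i
  simp only [update_self, update_of_ne hne] at hi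
  exact hs (sub_eq_self.1 hi)

theorem snoc_init_neg_sum {k : ℕ} {c : Fin (k + 1) → G} (hc : ∑ j, c j = 0) :
    Fin.snoc (Fin.init c) (-∑ i, Fin.init c i) = c := by
  rw [Fin.sum_univ_castSucc, add_eq_zero_iff_eq_neg'] at hc
  change Fin.snoc (Fin.init c) (-∑ i : Fin k, c i.castSucc) = c
  rw [← hc, Fin.snoc_init_self]

end Codewords

theorem span_range_vandermonde_eq_top {K : Type*} [Field K] {m : ℕ} {z : Fin m → K}
    (hz : Injective z) : Submodule.span K (Set.range (Matrix.vandermonde z)) = ⊤ :=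
  (Matrix.linearIndependent_rows_of_det_ne_zero
    (Matrix.det_vandermonde_ne_zero_iff.mpr hz)).span_eq_top_of_card_eq_finrank' (by simp)

section Segre

variable (K : Type*) [Field K] {k : ℕ} (n : Fin k → ℕ)

theorem tprod_update_mem_segreG (v : ∀ i, Fin (n i + 1) → K) (i : Fin k)
    (x : Fin (n i + 1) → K) : tprod K (update v i x) ∈ segreG K n v i :=
  ⟨x, rfl⟩

theorem segreG_le_segreTangent (v : ∀ i, Fin (n i + 1) → K) (i : Fin k) :
    segreG K n v i ≤ segreTangent K n v :=
  le_iSup (segreG K n v) i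

variable {K n}

theorem segreG_le_of_span_eq_top {v : ∀ i, Fin (n i + 1) → K} {i : Fin k}
    {S : Submodule K (⨂[K] i, (Fin (n i + 1) → K))} {s : Set (Fin (n i + 1) → K)}
    (hs : Submodule.span K s = ⊤) (h : ∀ x ∈ s, tprod K (update v i x) ∈ S) :
    segreG K n v i ≤ S := by
  rw [segreG, LinearMap.range_eq_map, ← hs, Submodule.map_span_le]
  exact h

theorem eq_top_of_tprod_single_mem {S : Submodule K (⨂[K] i, (Fin (n i + 1) → K))}
    (h : ∀ f : ∀ i, Fin (n i + 1), (⨂ₜ[K] i, Pi.single (f i) (1 : K)) ∈ S) :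
    S = ⊤ := by
  rw [eq_top_iff, ← (Basis.piTensorProduct fun i => Pi.basisFun K (Fin (n i + 1))).span_eq,
    Submodule.span_le, Set.range_subset_iff]
  intro f
  rw [Basis.piTensorProduct_apply]
  simpa using h f

end Segre

abbrev segreDims (k n : ℕ) : Fin (k + 2) → ℕ := Fin.cons k fun _ => n

section Codes

variable (K : Type*) [Field K] {k n : ℕ}

noncomputable def codeNode (c : Fin (k + 1) → Fin (n + 1)) : K :=
  (finFunctionFinEquiv c : ℕ)

theorem codeNode_injective [CharZero K] : Injective (codeNode K (k := k) (n := n)) :=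
  Nat.cast_injective.comp (Fin.val_injective.comp finFunctionFinEquiv.injective)

noncomputable def codePoint (c : Fin (k + 1) → Fin (n + 1)) :
    ∀ i, Fin (segreDims k n i + 1) → K :=
  Fin.cons (fun m : Fin (k + 1) => codeNode K c ^ (m : ℕ)) fun j => Pi.single (c j) 1

@[simp]
theorem codePoint_zero (c : Fin (k + 1) → Fin (n + 1)) :
    codePoint K c 0 = fun m : Fin (k + 1) => codeNode K c ^ (m : ℕ) :=
  rfl

theorem codePoint_ne_zero (c : Fin (k + 1) → Fin (n + 1)) (i : Fin (k + 2)) :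
    codePoint K c i ≠ 0 := by
  refine Fin.cases (fun h => ?_) (fun j => ?_) i
  · simpa using congrFun h 0
  · exact Pi.single_eq_zero_iff.not.2 one_ne_zero

theorem update_codePoint_update_succ (a : Fin (k + 1) → Fin (n + 1)) (i : Fin (k + 1))
    (b : Fin (n + 1)) :
    update (codePoint K (update a i b)) i.succ (Pi.single (a i) 1)
      = update (codePoint K a) 0 (codePoint K (update a i b) 0) := by
  ext j : 1
  refine Fin.cases ?_ (fun j => ?_) j
  · rw [update_of_ne (Fin.succ_ne_zero i).symm, update_self]
  · rw [update_of_ne (Fin.succ_ne_zero j)]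
    rcases eq_or_ne j i with rfl | hji
    · rw [update_self]; rfl
    · rw [update_of_ne ((Fin.succ_injective _).ne hji)]
      exact congrArg (Pi.single · 1) (update_of_ne hji _ _)

theorem tprod_single_eq_tprod_update_codePoint (f : ∀ i, Fin (segreDims k n i + 1)) :
    (⨂ₜ[K] i, Pi.single (f i) (1 : K))
      = tprod K (update (codePoint K (Fin.tail f)) 0 (Pi.single (f 0) 1)) := by
  congr 1
  ext j : 1
  refine Fin.cases ?_ (fun j => ?_) j
  · rw [update_self]
  · rw [update_of_ne (Fin.succ_ne_zero j)]; rfl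

noncomputable def codewordTangentSpan :
    Submodule K (⨂[K] i, (Fin (segreDims k n i + 1) → K)) :=
  ⨆ (c : Fin (k + 1) → Fin (n + 1)) (_ : ∑ j, c j = 0), segreTangent K _ (codePoint K c)

theorem segreTangent_codePoint_le {c : Fin (k + 1) → Fin (n + 1)} (hc : ∑ j, c j = 0) :
    segreTangent K _ (codePoint K c) ≤ codewordTangentSpan K :=
  le_iSup₂ (f := fun c (_ : ∑ j, c j = 0) => segreTangent K _ (codePoint K c)) c hc

theorem segreG_codePoint_zero_le_codewordTangentSpan [CharZero K]
    (a : Fin (k + 1) → Fin (n + 1)) :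
    segreG K (segreDims k n) (codePoint K a) 0 ≤ codewordTangentSpan K := by
  by_cases hs : ∑ t, a t = 0
  · exact (segreG_le_segreTangent K _ _ 0).trans (segreTangent_codePoint_le K hs)
  -- `neighbour i` is the codeword that differs from `a` only in slot `i`, so the `i.succ`-th
  -- summand of its tangent space contains `m(z_{neighbour i}) ⊗ e_{a₀} ⊗ ⋯ ⊗ e_{a_k}`.
  set neighbour := fun i => update a i (a i - ∑ t, a t)
  refine segreG_le_of_span_eq_top (span_range_vandermonde_eq_top
    (z := fun i => codeNode K (neighbour i))
    ((codeNode_injective K).comp (update_sub_sum_injective a hs))) ?_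
  rintro _ ⟨i, rfl⟩
  have h := tprod_update_mem_segreG K _ (codePoint K (neighbour i)) i.succ (Pi.single (a i) 1)
  rw [update_codePoint_update_succ] at h
  exact segreTangent_codePoint_le K (sum_update_sub_sum_eq_zero a i)
    (segreG_le_segreTangent K _ _ _ h)

theorem codewordTangentSpan_eq_top [CharZero K] :
    codewordTangentSpan K (k := k) (n := n) = ⊤ := by
  refine eq_top_of_tprod_single_mem fun f => ?_
  rw [tprod_single_eq_tprod_update_codePoint]
  exact segreG_codePoint_zero_le_codewordTangentSpan K _ (tprod_update_mem_segreG K _ _ 0 _)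

end Codes

theorem Pk_times_Pn_pow_perfect_general
    (K : Type*) [Field K] [CharZero K] (k n : ℕ) :
    ((n + 1) ^ k * (1 + ∑ i, (Fin.cons k (fun _ : Fin (k + 1) => n) : Fin (k + 2) → ℕ) i)
        = ∏ i, ((Fin.cons k (fun _ : Fin (k + 1) => n) : Fin (k + 2) → ℕ) i + 1)) ∧
    (∏ i, ((Fin.cons k (fun _ : Fin (k + 1) => n) : Fin (k + 2) → ℕ) i + 1)
        = (k + 1) * (n + 1) ^ (k + 1)) ∧
    ∃ p : Fin ((n + 1) ^ k) →
        ∀ i, Fin ((Fin.cons k (fun _ : Fin (k + 1) => n) : Fin (k + 2) → ℕ) i + 1) → K,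
      (∀ j i, p j i ≠ 0) ∧
      (⨆ j, segreTangent K (Fin.cons k (fun _ : Fin (k + 1) => n)) (p j))
        = (⊤ : Submodule K (⨂[K] i,
            (Fin ((Fin.cons k (fun _ : Fin (k + 1) => n) : Fin (k + 2) → ℕ) i + 1) → K))) := by
  have hsum : ∑ i, segreDims k n i = k + (k + 1) * n := by simp [Fin.sum_cons]
  have hprod : ∏ i, (segreDims k n i + 1) = (k + 1) * (n + 1) ^ (k + 1) := by
    simp [Fin.prod_univ_succ]
  refine ⟨by rw [hsum, hprod]; ring, hprod,
    fun j => codePoint K (Fin.snoc (finFunctionFinEquiv.symm j)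
      (-∑ i, finFunctionFinEquiv.symm j i)),
    fun j => codePoint_ne_zero K _, ?_⟩
  refine top_le_iff.1 ((codewordTangentSpan_eq_top K).symm.trans_le (iSup₂_le fun c hc => ?_))
  refine le_iSup_of_le (finFunctionFinEquiv (Fin.init c)) ?_
  simp only [Equiv.symm_apply_apply, snoc_init_neg_sum hc, le_refl]

/-- Let `n` be an odd positive integer and `k ≥ 1`.  Then the Segre
variety `P^k × (Pⁿ)^{k+1}` is perfect: the tuple `(k, n, …, n; (n+1)^k; 0,…,0)` is
equiabundant, and there exist `(n+1)^k` points whose tangent spaces span the whole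
tensor space `K^{k+1} ⊗ (K^{n+1})^{⊗(k+1)}`, of dimension `(k+1)(n+1)^{k+1}`. -/
theorem Pk_times_Pn_pow_perfect
    (K : Type*) [Field K] [CharZero K] (k n : ℕ) (hk : 1 ≤ k)
    (hodd : Odd n) (hpos : 1 ≤ n) :
    ((n + 1) ^ k * (1 + ∑ i, (Fin.cons k (fun _ : Fin (k + 1) => n) : Fin (k + 2) → ℕ) i)
        = ∏ i, ((Fin.cons k (fun _ : Fin (k + 1) => n) : Fin (k + 2) → ℕ) i + 1)) ∧
    (∏ i, ((Fin.cons k (fun _ : Fin (k + 1) => n) : Fin (k + 2) → ℕ) i + 1)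
        = (k + 1) * (n + 1) ^ (k + 1)) ∧
    ∃ p : Fin ((n + 1) ^ k) →
        ∀ i, Fin ((Fin.cons k (fun _ : Fin (k + 1) => n) : Fin (k + 2) → ℕ) i + 1) → K,
      (∀ j i, p j i ≠ 0) ∧
      (⨆ j, segreTangent K (Fin.cons k (fun _ : Fin (k + 1) => n)) (p j))
        = (⊤ : Submodule K (⨂[K] i,
            (Fin ((Fin.cons k (fun _ : Fin (k + 1) => n) : Fin (k + 2) → ℕ) i + 1) → K))) :=
  Pk_times_Pn_pow_perfect_general K k n
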